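/- In the driver setup: if E[Y|A,C] and E[A|C] are both nondecreasing in C or both nonincreasing in C, then E[Y|A,D] and E[A|D] are both nondecreasing in D or both nonincreasing in D; and if one of E[Y|A,C], E[A|C] is nondecreasing in C and the other is nonincreasing in C, then one of E[Y|A,D], E[A|D] is nondecreasing in D and the other is nonincreasing in D. -/

import Mathlib

/-!
Every contrast in D is the corresponding contrast in C times a factor whose sign is that of
p(c|d) - p(c|d'). For E[A|D] this is p(a|d) - p(a|d') = (p(a|c) - p(a|c'))(p(c|d) - p(c|d')).
For E[Y|x,D], the difference E[Y|x,d] - E[Y|x,d'] is (E[Y|x,c] - E[Y|x,c'])(p(c|x,d) - p(c|x,d')).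
The posterior contrast p(c|x,d) - p(c|x,d') is a positive multiple of p(d|c) - p(d|c'), and by
Bayes' rule that is a positive multiple of p(c|d) - p(c|d'). So the sign pattern of the
C-contrasts carries over to D, reversed exactly when p(c|d) < p(c|d').
-/

/-- p(c | x, v) = p(x|c) p(v|c) p(c) / (p(x|c) p(v|c) p(c) + p(x|c') p(v|c') p(c')),
with p(c') = 1 - p(c). -/
noncomputable def pcGiven (pxc pxc' pvc pvc' pc : ℝ) : ℝ :=
  pxc * pvc * pc / (pxc * pvc * pc + pxc' * pvc' * (1 - pc))

/-- E[Y | x, v] = E[Y|x,c] * p(c|x,v) + E[Y|x,c'] * (1 - p(c|x,v)). -/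
noncomputable def condExp (yc yc' w : ℝ) : ℝ := yc * w + yc' * (1 - w)

theorem condExp_sub_condExp (y y' w w' : ℝ) :
    condExp y y' w - condExp y y' w' = (y - y') * (w - w') := by
  unfold condExp
  ring

theorem pcGiven_sub_pcGiven_one_sub {px px' e e' q : ℝ} (hpx : 0 < px) (hpx' : 0 < px')
    (he : e ∈ Set.Ioo 0 1) (he' : e' ∈ Set.Ioo 0 1) (hq : q ∈ Set.Ioo 0 1) :
    ∃ k > 0, pcGiven px px' e e' q - pcGiven px px' (1 - e) (1 - e') q = k * (e - e') := by
  obtain ⟨he0, he1⟩ := he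
  obtain ⟨he'0, he'1⟩ := he'
  obtain ⟨hq0, hq1⟩ := hq
  have hD : 0 < px * e * q + px' * e' * (1 - q) :=
    add_pos (mul_pos (mul_pos hpx he0) hq0) (mul_pos (mul_pos hpx' he'0) (sub_pos.2 hq1))
  have hD' : 0 < px * (1 - e) * q + px' * (1 - e') * (1 - q) :=
    add_pos (mul_pos (mul_pos hpx (sub_pos.2 he1)) hq0)
      (mul_pos (mul_pos hpx' (sub_pos.2 he'1)) (sub_pos.2 hq1))
  refine ⟨px * px' * q * (1 - q) / ((px * e * q + px' * e' * (1 - q)) *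
    (px * (1 - e) * q + px' * (1 - e') * (1 - q))), ?_, ?_⟩
  · exact div_pos (mul_pos (mul_pos (mul_pos hpx hpx') hq0) (sub_pos.2 hq1)) (mul_pos hD hD')
  · unfold pcGiven
    field_simp
    ring

theorem mul_add_mul_one_sub_mem_Ioo {a b t : ℝ} (ha : a ∈ Set.Ioo 0 1) (hb : b ∈ Set.Ioo 0 1)
    (ht0 : 0 ≤ t) (ht1 : t ≤ 1) : a * t + b * (1 - t) ∈ Set.Ioo 0 1 := by
  simpa only [smul_eq_mul, mul_comm] using
    convex_Ioo (0 : ℝ) 1 ha hb ht0 (sub_nonneg.2 ht1) (add_sub_cancel t 1)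

theorem div_add_mem_Ioo {x y : ℝ} (hx : 0 < x) (hy : 0 < y) : x / (x + y) ∈ Set.Ioo 0 1 :=
  ⟨by positivity, (div_lt_one (by positivity)).2 (lt_add_of_pos_right x hy)⟩

section Driver

variable {pd pcd pcd' : ℝ}

theorem posterior_mem_Ioo (hpd0 : 0 < pd) (hpd1 : pd < 1) (hpcd : pcd ∈ Set.Ioo 0 1)
    (hpcd' : pcd' ∈ Set.Ioo 0 1) :
    pcd * pd / (pcd * pd + pcd' * (1 - pd)) ∈ Set.Ioo 0 1 ∧
      (1 - pcd) * pd / (1 - (pcd * pd + pcd' * (1 - pd))) ∈ Set.Ioo 0 1 := by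
  rw [show 1 - (pcd * pd + pcd' * (1 - pd)) = (1 - pcd) * pd + (1 - pcd') * (1 - pd) by ring]
  have h1pd : 0 < 1 - pd := sub_pos.2 hpd1
  exact ⟨div_add_mem_Ioo (mul_pos hpcd.1 hpd0) (mul_pos hpcd'.1 h1pd),
    div_add_mem_Ioo (mul_pos (sub_pos.2 hpcd.2) hpd0) (mul_pos (sub_pos.2 hpcd'.2) h1pd)⟩

theorem posterior_sub_posterior (hpd0 : 0 < pd) (hpd1 : pd < 1) (hpcd : pcd ∈ Set.Ioo 0 1)
    (hpcd' : pcd' ∈ Set.Ioo 0 1) :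
    ∃ k > 0, pcd * pd / (pcd * pd + pcd' * (1 - pd)) -
      (1 - pcd) * pd / (1 - (pcd * pd + pcd' * (1 - pd))) = k * (pcd - pcd') := by
  obtain ⟨hq0, hq1⟩ := mul_add_mul_one_sub_mem_Ioo hpcd hpcd' hpd0.le hpd1.le
  have h1q := sub_pos.2 hq1
  refine ⟨pd * (1 - pd) / ((pcd * pd + pcd' * (1 - pd)) * (1 - (pcd * pd + pcd' * (1 - pd)))),
    ?_, ?_⟩
  · have := sub_pos.2 hpd1
    positivity
  · field_simp
    ring

theorem condExp_driver_sub (y y' : ℝ) {px px' : ℝ} (hpx : 0 < px) (hpx' : 0 < px')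
    (hpd0 : 0 < pd) (hpd1 : pd < 1) (hpcd : pcd ∈ Set.Ioo 0 1) (hpcd' : pcd' ∈ Set.Ioo 0 1) :
    ∃ k > 0,
      condExp y y' (pcGiven px px' (pcd * pd / (pcd * pd + pcd' * (1 - pd)))
          ((1 - pcd) * pd / (1 - (pcd * pd + pcd' * (1 - pd)))) (pcd * pd + pcd' * (1 - pd))) -
        condExp y y' (pcGiven px px' (1 - pcd * pd / (pcd * pd + pcd' * (1 - pd)))
          (1 - (1 - pcd) * pd / (1 - (pcd * pd + pcd' * (1 - pd))))
          (pcd * pd + pcd' * (1 - pd))) =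
      (y - y') * (k * (pcd - pcd')) := by
  obtain ⟨he, he'⟩ := posterior_mem_Ioo hpd0 hpd1 hpcd hpcd'
  obtain ⟨k, hk, hw⟩ := pcGiven_sub_pcGiven_one_sub hpx hpx' he he'
    (mul_add_mul_one_sub_mem_Ioo hpcd hpcd' hpd0.le hpd1.le)
  obtain ⟨l, hl, hpost⟩ := posterior_sub_posterior hpd0 hpd1 hpcd hpcd'
  refine ⟨k * l, mul_pos hk hl, ?_⟩
  rw [condExp_sub_condExp, hw, hpost, mul_assoc]

end Driver

theorem sign_pattern_transfer {y y' z z' p p' ey ey' ez ez' ep ep' k l s : ℝ}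
    (hk : 0 < k) (hl : 0 < l) (hy : ey - ey' = (y - y') * (k * s))
    (hz : ez - ez' = (z - z') * (l * s)) (hp : ep - ep' = (p - p') * s) :
    ((y' ≤ y ∧ z' ≤ z) ∧ p' ≤ p ∨ (y ≤ y' ∧ z ≤ z') ∧ p ≤ p') →
      ((ey' ≤ ey ∧ ez' ≤ ez) ∧ ep' ≤ ep ∨ (ey ≤ ey' ∧ ez ≤ ez') ∧ ep ≤ ep') := by
  rcases le_total 0 s with hs | hs
  · have hks := mul_nonneg hk.le hs
    have hls := mul_nonneg hl.le hs
    rintro (⟨⟨hy', hz'⟩, hp'⟩ | ⟨⟨hy', hz'⟩, hp'⟩)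
    · exact .inl ⟨⟨by nlinarith, by nlinarith⟩, by nlinarith⟩
    · exact .inr ⟨⟨by nlinarith, by nlinarith⟩, by nlinarith⟩
  · have hks := mul_nonpos_of_nonneg_of_nonpos hk.le hs
    have hls := mul_nonpos_of_nonneg_of_nonpos hl.le hs
    rintro (⟨⟨hy', hz'⟩, hp'⟩ | ⟨⟨hy', hz'⟩, hp'⟩)
    · exact .inr ⟨⟨by nlinarith, by nlinarith⟩, by nlinarith⟩
    · exact .inl ⟨⟨by nlinarith, by nlinarith⟩, by nlinarith⟩

theorem stmt10_general (pd pcd pcd' pac pac' Yac Yac' Ybc Ybc' : ℝ)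
    (hpd0 : 0 < pd) (hpd1 : pd < 1)
    (hpcd0 : 0 < pcd) (hpcd1 : pcd < 1) (hpcd'0 : 0 < pcd') (hpcd'1 : pcd' < 1)
    (hpac0 : 0 < pac) (hpac1 : pac < 1) (hpac'0 : 0 < pac') (hpac'1 : pac' < 1) :
    ((((Yac ≥ Yac' ∧ Ybc ≥ Ybc') ∧ (pac ≥ pac')) ∨ ((Yac ≤ Yac' ∧ Ybc ≤ Ybc') ∧ (pac ≤ pac'))) →
      (((condExp Yac Yac' (pcGiven pac pac' (pcd * pd / (pcd * pd + pcd' * (1 - pd))) ((1 - pcd) * pd / (1 - (pcd * pd + pcd' * (1 - pd)))) (pcd * pd + pcd' * (1 - pd))) ≥ condExp Yac Yac' (pcGiven pac pac' (1 - (pcd * pd / (pcd * pd + pcd' * (1 - pd)))) (1 - ((1 - pcd) * pd / (1 - (pcd * pd + pcd' * (1 - pd))))) (pcd * pd + pcd' * (1 - pd))) ∧ condExp Ybc Ybc' (pcGiven (1 - pac) (1 - pac') (pcd * pd / (pcd * pd + pcd' * (1 - pd))) ((1 - pcd) * pd / (1 - (pcd * pd + pcd' * (1 - pd)))) (pcd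 * pd + pcd' * (1 - pd))) ≥ condExp Ybc Ybc' (pcGiven (1 - pac) (1 - pac') (1 - (pcd * pd / (pcd * pd + pcd' * (1 - pd)))) (1 - ((1 - pcd) * pd / (1 - (pcd * pd + pcd' * (1 - pd))))) (pcd * pd + pcd' * (1 - pd)))) ∧ ((pac * pcd + pac' * (1 - pcd)) ≥ (pac * pcd' + pac' * (1 - pcd')))) ∨ ((condExp Yac Yac' (pcGiven pac pac' (pcd * pd / (pcd * pd + pcd' * (1 - pd))) ((1 - pcd) * pd / (1 - (pcd * pd + pcd' * (1 - pd)))) (pcd * pd + pcd' * (1 - pd))) ≤ condExp Yac Yac' (pcGiven pac pac' (1 - (pcd * pd / (pcd * pd + pcd' * (1 - pd)))) (1 - ((1 - pcd) * pd / (1 - (pcd * pd + pcd' * (1 - pd))))) (pcd * pd + pcd' * (1 - pd))) ∧ condExp Ybc Ybc' (pcGiven (1 - pac) (1 - pac') (pcd * pd / (pcd * pd + pcd' * (1 - pd))) ((1 - pcd) * pd / (1 - (pcd * pd + pcd' * (1 - pd)))) (pcd * pd + pcd' * (1 - pd))) ≤ condExp Ybc Ybc' (pcGiven (1 - pac) (1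 - pac') (1 - (pcd * pd / (pcd * pd + pcd' * (1 - pd)))) (1 - ((1 - pcd) * pd / (1 - (pcd * pd + pcd' * (1 - pd))))) (pcd * pd + pcd' * (1 - pd)))) ∧ ((pac * pcd + pac' * (1 - pcd)) ≤ (pac * pcd' + pac' * (1 - pcd')))))) ∧
    ((((Yac ≥ Yac' ∧ Ybc ≥ Ybc') ∧ (pac ≤ pac')) ∨ ((Yac ≤ Yac' ∧ Ybc ≤ Ybc') ∧ (pac ≥ pac'))) →
      (((condExp Yac Yac' (pcGiven pac pac' (pcd * pd / (pcd * pd + pcd' * (1 - pd))) ((1 - pcd) * pd / (1 - (pcd * pd + pcd' * (1 - pd)))) (pcd * pd + pcd' * (1 - pd))) ≥ condExp Yac Yac' (pcGiven pac pac' (1 - (pcd * pd / (pcd * pd + pcd' * (1 - pd)))) (1 - ((1 - pcd) * pd / (1 - (pcd * pd + pcd' * (1 - pd))))) (pcd * pd + pcd' * (1 - pd))) ∧ condExp Ybc Ybc' (pcGiven (1 - pac) (1 - pac') (pcd * pd / (pcd * pd + pcd' * (1 - pd))) ((1 - pcd) * pd / (1 - (pcd * pd + pcd' * (1 - pd))))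 (pcd * pd + pcd' * (1 - pd))) ≥ condExp Ybc Ybc' (pcGiven (1 - pac) (1 - pac') (1 - (pcd * pd / (pcd * pd + pcd' * (1 - pd)))) (1 - ((1 - pcd) * pd / (1 - (pcd * pd + pcd' * (1 - pd))))) (pcd * pd + pcd' * (1 - pd)))) ∧ ((pac * pcd + pac' * (1 - pcd)) ≤ (pac * pcd' + pac' * (1 - pcd')))) ∨ ((condExp Yac Yac' (pcGiven pac pac' (pcd * pd / (pcd * pd + pcd' * (1 - pd))) ((1 - pcd) * pd / (1 - (pcd * pd + pcd' * (1 - pd)))) (pcd * pd + pcd' * (1 - pd))) ≤ condExp Yac Yac' (pcGiven pac pac' (1 - (pcd * pd / (pcd * pd + pcd' * (1 - pd)))) (1 - ((1 - pcd) * pd / (1 - (pcd * pd + pcd' * (1 - pd))))) (pcd * pd + pcd' * (1 - pd))) ∧ condExp Ybc Ybc' (pcGiven (1 - pac) (1 - pac') (pcd * pd / (pcd * pd + pcd' * (1 - pd))) ((1 - pcd) * pd / (1 - (pcd * pd + pcd' * (1 - pd)))) (pcd * pd + pcd' * (1 - pd))) ≤ condExp Ybc Ybc' (pcGiven (1 -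 pac) (1 - pac') (1 - (pcd * pd / (pcd * pd + pcd' * (1 - pd)))) (1 - ((1 - pcd) * pd / (1 - (pcd * pd + pcd' * (1 - pd))))) (pcd * pd + pcd' * (1 - pd)))) ∧ ((pac * pcd + pac' * (1 - pcd)) ≥ (pac * pcd' + pac' * (1 - pcd')))))) := by
  have hpcd : pcd ∈ Set.Ioo 0 1 := ⟨hpcd0, hpcd1⟩
  have hpcd' : pcd' ∈ Set.Ioo 0 1 := ⟨hpcd'0, hpcd'1⟩
  obtain ⟨ka, hka, hYa⟩ := condExp_driver_sub Yac Yac' hpac0 hpac'0 hpd0 hpd1 hpcd hpcd'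
  obtain ⟨kb, hkb, hYb⟩ :=
    condExp_driver_sub Ybc Ybc' (sub_pos.2 hpac1) (sub_pos.2 hpac'1) hpd0 hpd1 hpcd hpcd'
  exact ⟨sign_pattern_transfer hka hkb hYa hYb (by ring),
    sign_pattern_transfer hka hkb hYa hYb (by ring)⟩

/-- Driver setup: if E[Y|A,C] and E[A|C] are both nondecreasing or both
nonincreasing in C, then E[Y|A,D] and E[A|D] are both nondecreasing or both
nonincreasing in D; if one is nondecreasing and the other nonincreasing in C,
then likewise in D. -/
theorem stmt10 (pd pcd pcd' pac pac' Yac Yac' Ybc Ybc' : ℝ)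
    (hpd0 : 0 < pd) (hpd1 : pd < 1)
    (hpcd0 : 0 < pcd) (hpcd1 : pcd < 1) (hpcd'0 : 0 < pcd') (hpcd'1 : pcd' < 1)
    (hpac0 : 0 < pac) (hpac1 : pac < 1) (hpac'0 : 0 < pac') (hpac'1 : pac' < 1)
    (hne : pcd ≠ pcd') :
    ((((Yac ≥ Yac' ∧ Ybc ≥ Ybc') ∧ (pac ≥ pac')) ∨ ((Yac ≤ Yac' ∧ Ybc ≤ Ybc') ∧ (pac ≤ pac'))) →
      (((condExp Yac Yac' (pcGiven pac pac' (pcd * pd / (pcd * pd + pcd' * (1 - pd))) ((1 - pcd) * pd / (1 - (pcd * pd + pcd' * (1 - pd)))) (pcd * pd + pcd' * (1 - pd))) ≥ condExp Yac Yac' (pcGiven pac pac' (1 - (pcd * pd / (pcd * pd + pcd' * (1 - pd)))) (1 - ((1 - pcd) * pd / (1 - (pcd * pd + pcd' * (1 - pd))))) (pcd * pd + pcd' * (1 - pd))) ∧ condExp Ybc Ybc' (pcGiven (1 - pac) (1 - pac') (pcd * pd / (pcd * pd + pcd' * (1 - pd))) ((1 - pcd) * pd / (1 - (pcd * pd + pcd'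 * (1 - pd)))) (pcd * pd + pcd' * (1 - pd))) ≥ condExp Ybc Ybc' (pcGiven (1 - pac) (1 - pac') (1 - (pcd * pd / (pcd * pd + pcd' * (1 - pd)))) (1 - ((1 - pcd) * pd / (1 - (pcd * pd + pcd' * (1 - pd))))) (pcd * pd + pcd' * (1 - pd)))) ∧ ((pac * pcd + pac' * (1 - pcd)) ≥ (pac * pcd' + pac' * (1 - pcd')))) ∨ ((condExp Yac Yac' (pcGiven pac pac' (pcd * pd / (pcd * pd + pcd' * (1 - pd))) ((1 - pcd) * pd / (1 - (pcd * pd + pcd' * (1 - pd)))) (pcd * pd + pcd' * (1 - pd))) ≤ condExp Yac Yac' (pcGiven pac pac' (1 - (pcd * pd / (pcd * pd + pcd' * (1 - pd)))) (1 - ((1 - pcd) * pd / (1 - (pcd * pd + pcd' * (1 - pd))))) (pcd * pd + pcd' * (1 - pd))) ∧ condExp Ybc Ybc' (pcGiven (1 - pac) (1 - pac') (pcd * pd / (pcd * pd + pcd' * (1 - pd))) ((1 - pcd) * pd / (1 - (pcd * pd + pcd' * (1 - pd)))) (pcd * pd + pcd' * (1 - pd))) ≤ condExp Ybc Ybc'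 (pcGiven (1 - pac) (1 - pac') (1 - (pcd * pd / (pcd * pd + pcd' * (1 - pd)))) (1 - ((1 - pcd) * pd / (1 - (pcd * pd + pcd' * (1 - pd))))) (pcd * pd + pcd' * (1 - pd)))) ∧ ((pac * pcd + pac' * (1 - pcd)) ≤ (pac * pcd' + pac' * (1 - pcd')))))) ∧
    ((((Yac ≥ Yac' ∧ Ybc ≥ Ybc') ∧ (pac ≤ pac')) ∨ ((Yac ≤ Yac' ∧ Ybc ≤ Ybc') ∧ (pac ≥ pac'))) →
      (((condExp Yac Yac' (pcGiven pac pac' (pcd * pd / (pcd * pd + pcd' * (1 - pd))) ((1 - pcd) * pd / (1 - (pcd * pd + pcd' * (1 - pd)))) (pcd * pd + pcd' * (1 - pd))) ≥ condExp Yac Yac' (pcGiven pac pac' (1 - (pcd * pd / (pcd * pd + pcd' * (1 - pd)))) (1 - ((1 - pcd) * pd / (1 - (pcd * pd + pcd' * (1 - pd))))) (pcd * pd + pcd' * (1 - pd))) ∧ condExp Ybc Ybc' (pcGiven (1 - pac) (1 - pac') (pcd * pd / (pcd * pd + pcd' * (1 - pd))) ((1 - pcd) * pd / (1 - (pcd *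 pd + pcd' * (1 - pd)))) (pcd * pd + pcd' * (1 - pd))) ≥ condExp Ybc Ybc' (pcGiven (1 - pac) (1 - pac') (1 - (pcd * pd / (pcd * pd + pcd' * (1 - pd)))) (1 - ((1 - pcd) * pd / (1 - (pcd * pd + pcd' * (1 - pd))))) (pcd * pd + pcd' * (1 - pd)))) ∧ ((pac * pcd + pac' * (1 - pcd)) ≤ (pac * pcd' + pac' * (1 - pcd')))) ∨ ((condExp Yac Yac' (pcGiven pac pac' (pcd * pd / (pcd * pd + pcd' * (1 - pd))) ((1 - pcd) * pd / (1 - (pcd * pd + pcd' * (1 - pd)))) (pcd * pd + pcd' * (1 - pd))) ≤ condExp Yac Yac' (pcGiven pac pac' (1 - (pcd * pd / (pcd * pd + pcd' * (1 - pd)))) (1 - ((1 - pcd) * pd / (1 - (pcd * pd + pcd' * (1 - pd))))) (pcd * pd + pcd' * (1 - pd))) ∧ condExp Ybc Ybc' (pcGiven (1 - pac) (1 - pac') (pcd * pd / (pcd * pd + pcd' * (1 - pd))) ((1 - pcd) * pd / (1 - (pcd * pd + pcd' * (1 - pd)))) (pcd * pd + pcd' * (1 - pd))) ≤ condExp Ybc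 Ybc' (pcGiven (1 - pac) (1 - pac') (1 - (pcd * pd / (pcd * pd + pcd' * (1 - pd)))) (1 - ((1 - pcd) * pd / (1 - (pcd * pd + pcd' * (1 - pd))))) (pcd * pd + pcd' * (1 - pd)))) ∧ ((pac * pcd + pac' * (1 - pcd)) ≥ (pac * pcd' + pac' * (1 - pcd')))))) :=
  stmt10_general pd pcd pcd' pac pac' Yac Yac' Ybc Ybc' hpd0 hpd1 hpcd0 hpcd1 hpcd'0 hpcd'1 hpac0
    hpac1 hpac'0 hpac'1
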